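/- Define D̂ = λ(Σ12² + Σ13²) + 2Σ12Σ13 and Z2 = A⁴N²G+⁵D̂² / ((1−V²)^{5(2−γ)/2}·Ω⁵). Along any solution of the tilted Bianchi type VI_{-1/9} system with Ω(τ) > 0 and V(τ) < 1, one has the identity Z2' = (5γ−6)(3−2A v1)·Z2. -/

import Mathlib

noncomputable section

namespace BianchiVI

/-- squared tilt speed `V² = v1² + v2² + v3²`. -/
def Vsq (v1 v2 v3 : ℝ) : ℝ := v1^2 + v2^2 + v3^2

/-- `G₊ = 1 + (γ-1) V²`. -/
def Gp (γ v1 v2 v3 : ℝ) : ℝ := 1 + (γ - 1) * Vsq v1 v2 v3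

/-- total shear `Σ²`. -/
def Sig2 (sp sm s12 s13 s23 : ℝ) : ℝ := sp^2 + sm^2 + s12^2 + s13^2 + s23^2

/-- deceleration parameter `q`. -/
def qdef (γ sp sm s12 s13 s23 Om v1 v2 v3 : ℝ) : ℝ :=
  2 * Sig2 sp sm s12 s13 s23
    + (1/2) * ((3*γ - 2) + (2 - γ) * Vsq v1 v2 v3) * Om / Gp γ v1 v2 v3

/-- `P = Σ_{ab} v^a v^b · V²`, so that `S = P/V²`. -/
def Pdef (sp sm s12 s13 s23 v1 v2 v3 : ℝ) : ℝ :=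
  -2*sp*v1^2 + (sp + Real.sqrt 3 * sm) * v2^2 + (sp - Real.sqrt 3 * sm) * v3^2
    + 2*Real.sqrt 3*(s12*v1*v2 + s13*v1*v3 + s23*v2*v3)

/-- `S = Σ_{ab} c^a c^b`. -/
def Sdef (sp sm s12 s13 s23 v1 v2 v3 : ℝ) : ℝ :=
  if 0 < Vsq v1 v2 v3 then Pdef sp sm s12 s13 s23 v1 v2 v3 / Vsq v1 v2 v3 else 0

/-- the quantity `T`. -/
def Tdef (γ sp sm s12 s13 s23 A v1 v2 v3 : ℝ) : ℝ :=
  (((3*γ - 4) - 2*(γ-1)*A*v1) * (1 - Vsq v1 v2 v3)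
      + (2 - γ) * Pdef sp sm s12 s13 s23 v1 v2 v3)
    / (1 - (γ - 1) * Vsq v1 v2 v3)

/-- right-hand side of the evolution equation. -/
def rhsSp (γ sp sm s12 s13 s23 N lam A Om v1 v2 v3 : ℝ) : ℝ :=
  (qdef γ sp sm s12 s13 s23 Om v1 v2 v3 - 2) * sp + 3*(s12^2 + s13^2) - 2*N^2 + (γ*Om/(2*(Gp γ v1 v2 v3))) * (-2*v1^2 + v2^2 + v3^2)

/-- right-hand side of the evolution equation. -/
def rhsSm (γ sp sm s12 s13 s23 N lam A Om v1 v2 v3 : ℝ) : ℝ :=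
  (qdef γ sp sm s12 s13 s23 Om v1 v2 v3 - 2 - 2*Real.sqrt 3*s23*lam) * sm + Real.sqrt 3*(s12^2 - s13^2) + 2*A*N + (Real.sqrt 3*γ*Om/(2*(Gp γ v1 v2 v3))) * (v2^2 - v3^2)

/-- right-hand side of the evolution equation. -/
def rhsS12 (γ sp sm s12 s13 s23 N lam A Om v1 v2 v3 : ℝ) : ℝ :=
  (qdef γ sp sm s12 s13 s23 Om v1 v2 v3 - 2 - 3*sp - Real.sqrt 3*sm) * s12 - Real.sqrt 3*(s23 + sm*lam)*s13 + (Real.sqrt 3*γ*Om/(Gp γ v1 v2 v3))*v1*v2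

/-- right-hand side of the evolution equation. -/
def rhsS13 (γ sp sm s12 s13 s23 N lam A Om v1 v2 v3 : ℝ) : ℝ :=
  (qdef γ sp sm s12 s13 s23 Om v1 v2 v3 - 2 - 3*sp + Real.sqrt 3*sm) * s13 - Real.sqrt 3*(s23 - sm*lam)*s12 + (Real.sqrt 3*γ*Om/(Gp γ v1 v2 v3))*v1*v3

/-- right-hand side of the evolution equation. -/
def rhsS23 (γ sp sm s12 s13 s23 N lam A Om v1 v2 v3 : ℝ) : ℝ :=
  (qdef γ sp sm s12 s13 s23 Om v1 v2 v3 - 2) * s23 - 2*Real.sqrt 3*N^2*lam + 2*Real.sqrt 3*lam*sm^2 + 2*Real.sqrt 3*s12*s13 + (Real.sqrt 3*γ*Om/(Gp γ v1 v2 v3))*v2*v3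

/-- right-hand side of the evolution equation. -/
def rhsN (γ sp sm s12 s13 s23 N lam A Om v1 v2 v3 : ℝ) : ℝ :=
  (qdef γ sp sm s12 s13 s23 Om v1 v2 v3 + 2*sp + 2*Real.sqrt 3*s23*lam) * N

/-- right-hand side of the evolution equation. -/
def rhsLam (γ sp sm s12 s13 s23 N lam A Om v1 v2 v3 : ℝ) : ℝ :=
  2*Real.sqrt 3*s23*(1 - lam^2)

/-- right-hand side of the evolution equation. -/
def rhsA (γ sp sm s12 s13 s23 N lam A Om v1 v2 v3 : ℝ) : ℝ :=
  (qdef γ sp sm s12 s13 s23 Om v1 v2 v3 + 2*sp) * A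

/-- right-hand side of the evolution equation. -/
def rhsOm (γ sp sm s12 s13 s23 N lam A Om v1 v2 v3 : ℝ) : ℝ :=
  (Om/(Gp γ v1 v2 v3)) * (2*(qdef γ sp sm s12 s13 s23 Om v1 v2 v3) - (3*γ-2) + 2*γ*A*v1 + (2*(qdef γ sp sm s12 s13 s23 Om v1 v2 v3)*(γ-1) - (2-γ)) * Vsq v1 v2 v3 - γ*(Pdef sp sm s12 s13 s23 v1 v2 v3))

/-- right-hand side of the evolution equation. -/
def rhsV1 (γ sp sm s12 s13 s23 N lam A Om v1 v2 v3 : ℝ) : ℝ :=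
  ((Tdef γ sp sm s12 s13 s23 A v1 v2 v3) + 2*sp)*v1 - 2*Real.sqrt 3*s13*v3 - 2*Real.sqrt 3*s12*v2 - A*(v2^2 + v3^2) - Real.sqrt 3*N*(v2^2 - v3^2)

/-- right-hand side of the evolution equation. -/
def rhsV2 (γ sp sm s12 s13 s23 N lam A Om v1 v2 v3 : ℝ) : ℝ :=
  ((Tdef γ sp sm s12 s13 s23 A v1 v2 v3) - sp - Real.sqrt 3*sm)*v2 - Real.sqrt 3*(s23 + sm*lam)*v3 + Real.sqrt 3*lam*N*v1*v3 + (A + Real.sqrt 3*N)*v1*v2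

/-- right-hand side of the evolution equation. -/
def rhsV3 (γ sp sm s12 s13 s23 N lam A Om v1 v2 v3 : ℝ) : ℝ :=
  ((Tdef γ sp sm s12 s13 s23 A v1 v2 v3) - sp + Real.sqrt 3*sm)*v3 - Real.sqrt 3*(s23 - sm*lam)*v2 - Real.sqrt 3*lam*N*v1*v2 + (A - Real.sqrt 3*N)*v1*v3

/-- the five constraint equations (C1)-(C5). -/
def SatisfiesConstraints (γ sp sm s12 s13 s23 N lam A Om v1 v2 v3 : ℝ) : Prop :=
  Sig2 sp sm s12 s13 s23 + A^2 + N^2 + Om = 1 ∧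
  2*sp*A + 2*sm*N + γ*Om*v1/(Gp γ v1 v2 v3) = 0 ∧
  -(s12*(N + Real.sqrt 3*A) + s13*lam*N) + γ*Om*v2/(Gp γ v1 v2 v3) = 0 ∧
  s13*(N - Real.sqrt 3*A) + s12*lam*N + γ*Om*v3/(Gp γ v1 v2 v3) = 0 ∧
  3*A^2 = (1 - lam^2)*N^2

/-- equilibrium point: all twelve right-hand sides vanish. -/
def IsEquilibrium (γ sp sm s12 s13 s23 N lam A Om v1 v2 v3 : ℝ) : Prop :=
  rhsSp γ sp sm s12 s13 s23 N lam A Om v1 v2 v3 = 0 ∧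
  rhsSm γ sp sm s12 s13 s23 N lam A Om v1 v2 v3 = 0 ∧
  rhsS12 γ sp sm s12 s13 s23 N lam A Om v1 v2 v3 = 0 ∧
  rhsS13 γ sp sm s12 s13 s23 N lam A Om v1 v2 v3 = 0 ∧
  rhsS23 γ sp sm s12 s13 s23 N lam A Om v1 v2 v3 = 0 ∧
  rhsN γ sp sm s12 s13 s23 N lam A Om v1 v2 v3 = 0 ∧
  rhsLam γ sp sm s12 s13 s23 N lam A Om v1 v2 v3 = 0 ∧
  rhsA γ sp sm s12 s13 s23 N lam A Om v1 v2 v3 = 0 ∧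
  rhsOm γ sp sm s12 s13 s23 N lam A Om v1 v2 v3 = 0 ∧
  rhsV1 γ sp sm s12 s13 s23 N lam A Om v1 v2 v3 = 0 ∧
  rhsV2 γ sp sm s12 s13 s23 N lam A Om v1 v2 v3 = 0 ∧
  rhsV3 γ sp sm s12 s13 s23 N lam A Om v1 v2 v3 = 0

/-- a solution of the tilted Bianchi type VI_(-1/9) system on the set `dom`:
the twelve evolution equations and the five constraints hold at every `τ ∈ dom`. -/
def IsSolutionOn (γ : ℝ) (dom : Set ℝ) (sp sm s12 s13 s23 N lam A Om v1 v2 v3 : ℝ → ℝ) : Prop :=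
  ∀ τ ∈ dom,
    (HasDerivAt sp (rhsSp γ (sp τ) (sm τ) (s12 τ) (s13 τ) (s23 τ) (N τ) (lam τ) (A τ) (Om τ) (v1 τ) (v2 τ) (v3 τ)) τ ∧
    HasDerivAt sm (rhsSm γ (sp τ) (sm τ) (s12 τ) (s13 τ) (s23 τ) (N τ) (lam τ) (A τ) (Om τ) (v1 τ) (v2 τ) (v3 τ)) τ ∧
    HasDerivAt s12 (rhsS12 γ (sp τ) (sm τ) (s12 τ) (s13 τ) (s23 τ) (N τ) (lam τ) (A τ) (Om τ) (v1 τ) (v2 τ) (v3 τ)) τ ∧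
    HasDerivAt s13 (rhsS13 γ (sp τ) (sm τ) (s12 τ) (s13 τ) (s23 τ) (N τ) (lam τ) (A τ) (Om τ) (v1 τ) (v2 τ) (v3 τ)) τ ∧
    HasDerivAt s23 (rhsS23 γ (sp τ) (sm τ) (s12 τ) (s13 τ) (s23 τ) (N τ) (lam τ) (A τ) (Om τ) (v1 τ) (v2 τ) (v3 τ)) τ ∧
    HasDerivAt N (rhsN γ (sp τ) (sm τ) (s12 τ) (s13 τ) (s23 τ) (N τ) (lam τ) (A τ) (Om τ) (v1 τ) (v2 τ) (v3 τ)) τ ∧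
    HasDerivAt lam (rhsLam γ (sp τ) (sm τ) (s12 τ) (s13 τ) (s23 τ) (N τ) (lam τ) (A τ) (Om τ) (v1 τ) (v2 τ) (v3 τ)) τ ∧
    HasDerivAt A (rhsA γ (sp τ) (sm τ) (s12 τ) (s13 τ) (s23 τ) (N τ) (lam τ) (A τ) (Om τ) (v1 τ) (v2 τ) (v3 τ)) τ ∧
    HasDerivAt Om (rhsOm γ (sp τ) (sm τ) (s12 τ) (s13 τ) (s23 τ) (N τ) (lam τ) (A τ) (Om τ) (v1 τ) (v2 τ) (v3 τ)) τ ∧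
    HasDerivAt v1 (rhsV1 γ (sp τ) (sm τ) (s12 τ) (s13 τ) (s23 τ) (N τ) (lam τ) (A τ) (Om τ) (v1 τ) (v2 τ) (v3 τ)) τ ∧
    HasDerivAt v2 (rhsV2 γ (sp τ) (sm τ) (s12 τ) (s13 τ) (s23 τ) (N τ) (lam τ) (A τ) (Om τ) (v1 τ) (v2 τ) (v3 τ)) τ ∧
    HasDerivAt v3 (rhsV3 γ (sp τ) (sm τ) (s12 τ) (s13 τ) (s23 τ) (N τ) (lam τ) (A τ) (Om τ) (v1 τ) (v2 τ) (v3 τ)) τ) ∧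
    SatisfiesConstraints γ (sp τ) (sm τ) (s12 τ) (s13 τ) (s23 τ) (N τ) (lam τ) (A τ) (Om τ) (v1 τ) (v2 τ) (v3 τ)

/-- `D̂ = λ(Σ12² + Σ13²) + 2 Σ12 Σ13`. -/
def Dhat (lam s12 s13 : ℝ) : ℝ := lam*(s12^2 + s13^2) + 2*s12*s13

/-- the monotone function `Z2`. -/
def Z2fun (γ : ℝ) (s12 s13 N lam A Om v1 v2 v3 : ℝ → ℝ) : ℝ → ℝ := fun τ =>
  (A τ)^4 * (N τ)^2 * (Gp γ (v1 τ) (v2 τ) (v3 τ))^5 * (Dhat (lam τ) (s12 τ) (s13 τ))^2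
    / ((1 - Vsq (v1 τ) (v2 τ) (v3 τ)) ^ ((5*(2-γ)/2 : ℝ)) * (Om τ)^5)

end BianchiVI

/-!
Each factor of `Z2` has a growth rate along a solution (`X' = r X`): `A` and `N` by their
evolution equations, `G₊` and `1 - V²` through `(V²)' = 2 (T V² - P)`, `Ω` by its equation, and
`D̂` because the fluid terms `γ Ω v_a / G₊` of `Σ12'`, `Σ13'` are eliminated by the constraints
(C3), (C4). The rate of `Z2` is the corresponding combination of these rates; in it `q` and `Σ+`
cancel, and the definition of `T` reduces the rest to `(5γ - 6)(3 - 2 A v1)`.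
-/

section GrowthRate

variable {𝕜 : Type*} [NontriviallyNormedField 𝕜] {f g : 𝕜 → 𝕜} {a b x : 𝕜}

/-- `f' = a f` at `x`: the logarithmic derivative `a = f'/f`, without junk where `f x = 0`. -/
def HasGrowthRateAt (f : 𝕜 → 𝕜) (a x : 𝕜) : Prop := HasDerivAt f (a * f x) x

theorem HasDerivAt.hasGrowthRateAt {f' : 𝕜} (hf : HasDerivAt f f' x) (hx : f x ≠ 0) :
    HasGrowthRateAt f (f' / f x) x := by
  rwa [HasGrowthRateAt, div_mul_cancel₀ _ hx]

namespace HasGrowthRateAt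

theorem congr_rate (hf : HasGrowthRateAt f a x) (h : a = b) : HasGrowthRateAt f b x :=
  h ▸ hf

theorem mul (hf : HasGrowthRateAt f a x) (hg : HasGrowthRateAt g b x) :
    HasGrowthRateAt (fun t => f t * g t) (a + b) x :=
  (HasDerivAt.mul hf hg).congr_deriv (by ring)

theorem pow (hf : HasGrowthRateAt f a x) (n : ℕ) :
    HasGrowthRateAt (fun t => f t ^ n) (n * a) x := by
  refine (HasDerivAt.fun_pow hf n).congr_deriv ?_
  cases n with
  | zero => simp
  | succ n => simp only [Nat.add_sub_cancel, Nat.cast_succ, pow_succ]; ring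

theorem div (hf : HasGrowthRateAt f a x) (hg : HasGrowthRateAt g b x) (hx : g x ≠ 0) :
    HasGrowthRateAt (fun t => f t / g t) (a - b) x := by
  refine (HasDerivAt.fun_div hf hg hx).congr_deriv ?_
  field_simp

theorem rpow {f : ℝ → ℝ} {a x : ℝ} (hf : HasGrowthRateAt f a x) (hx : 0 < f x) (r : ℝ) :
    HasGrowthRateAt (fun t => f t ^ r) (r * a) x := by
  refine (HasDerivAt.rpow_const hf (p := r) (Or.inl hx.ne')).congr_deriv ?_
  rw [Real.rpow_sub_one hx.ne']
  field_simp

end HasGrowthRateAt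

end GrowthRate

namespace BianchiVI

theorem Tdef_mul {γ sp sm s12 s13 s23 A v1 v2 v3 : ℝ}
    (h : 1 - (γ - 1) * Vsq v1 v2 v3 ≠ 0) :
    Tdef γ sp sm s12 s13 s23 A v1 v2 v3 * (1 - (γ - 1) * Vsq v1 v2 v3)
      = ((3*γ - 4) - 2*(γ-1)*A*v1) * (1 - Vsq v1 v2 v3)
        + (2 - γ) * Pdef sp sm s12 s13 s23 v1 v2 v3 :=
  div_mul_cancel₀ _ h

/-- The summands are the growth rates of `A⁴`, `N²`, `G₊⁵`, `D̂²`, `(1 - V²)^(5(2-γ)/2)` and `Ω⁵`,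
with `m = V²`. -/
theorem Z2_growthRate_eq {γ q sp s23 lam A v1 m T P : ℝ} (hG : 1 + (γ - 1) * m ≠ 0) (hW : 1 - m ≠ 0)
    (hT : T * (1 - (γ - 1) * m) = ((3*γ - 4) - 2*(γ-1)*A*v1) * (1 - m) + (2 - γ) * P) :
    4 * (q + 2*sp) + 2 * (q + 2*sp + 2*Real.sqrt 3*s23*lam)
        + 5 * ((γ - 1) * (2 * (T * m - P)) / (1 + (γ - 1) * m))
        + 2 * (2 * (q - 2 - 3*sp - Real.sqrt 3*lam*s23) + 6*A*v1)
      - (5*(2-γ)/2 * (-(2 * (T * m - P)) / (1 - m))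
        + 5 * ((2*q - (3*γ-2) + 2*γ*A*v1 + (2*q*(γ-1) - (2-γ))*m - γ*P) / (1 + (γ - 1) * m)))
      = (5*γ - 6) * (3 - 2*A*v1) := by
  field_simp
  linear_combination (5 * γ * m) * hT

section Solution

variable {γ : ℝ} {dom : Set ℝ} {sp sm s12 s13 s23 N lam A Om v1 v2 v3 : ℝ → ℝ} {τ : ℝ}

theorem IsSolutionOn.hasDerivAt_Vsq
    (hsol : IsSolutionOn γ dom sp sm s12 s13 s23 N lam A Om v1 v2 v3) (hτ : τ ∈ dom) :
    HasDerivAt (fun t => Vsq (v1 t) (v2 t) (v3 t))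
      (2 * (Tdef γ (sp τ) (sm τ) (s12 τ) (s13 τ) (s23 τ) (A τ) (v1 τ) (v2 τ) (v3 τ)
          * Vsq (v1 τ) (v2 τ) (v3 τ)
        - Pdef (sp τ) (sm τ) (s12 τ) (s13 τ) (s23 τ) (v1 τ) (v2 τ) (v3 τ))) τ := by
  obtain ⟨⟨-, -, -, -, -, -, -, -, -, hv1, hv2, hv3⟩, -⟩ := hsol τ hτ
  refine (((hv1.fun_pow 2).add (hv2.fun_pow 2)).add (hv3.fun_pow 2)).congr_deriv ?_
  simp only [rhsV1, rhsV2, rhsV3, Pdef, Vsq]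
  push_cast
  ring

theorem IsSolutionOn.hasGrowthRateAt_Dhat
    (hsol : IsSolutionOn γ dom sp sm s12 s13 s23 N lam A Om v1 v2 v3) (hτ : τ ∈ dom) :
    HasGrowthRateAt (fun t => Dhat (lam t) (s12 t) (s13 t))
      (2 * (qdef γ (sp τ) (sm τ) (s12 τ) (s13 τ) (s23 τ) (Om τ) (v1 τ) (v2 τ) (v3 τ)
        - 2 - 3 * sp τ - Real.sqrt 3 * lam τ * s23 τ) + 6 * A τ * v1 τ) τ := by
  obtain ⟨⟨-, -, h12, h13, -, -, hlam, -⟩, -, -, hC3, hC4, -⟩ := hsol τ hτ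
  refine ((hlam.mul ((h12.fun_pow 2).add (h13.fun_pow 2))).add
    ((h12.const_mul 2).mul h13)).congr_deriv ?_
  simp only [rhsLam, rhsS12, rhsS13, Pi.add_apply]
  unfold Dhat
  push_cast
  linear_combination (2 * Real.sqrt 3 * v1 τ * (lam τ * s12 τ + s13 τ)) * hC3
    + (2 * Real.sqrt 3 * v1 τ * (lam τ * s13 τ + s12 τ)) * hC4
    + (2 * A τ * v1 τ * (lam τ * (s12 τ ^ 2 + s13 τ ^ 2) + 2 * s12 τ * s13 τ))
      * Real.sq_sqrt (show (0:ℝ) ≤ 3 by norm_num)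

end Solution

theorem Z2_evolution (γ : ℝ) (hγ : 0 < γ ∧ γ < 2) (dom : Set ℝ)
    (sp sm s12 s13 s23 N lam A Om v1 v2 v3 : ℝ → ℝ)
    (hsol : IsSolutionOn γ dom sp sm s12 s13 s23 N lam A Om v1 v2 v3)
    (hOm : ∀ τ ∈ dom, 0 < Om τ)
    (hV : ∀ τ ∈ dom, Real.sqrt (Vsq (v1 τ) (v2 τ) (v3 τ)) < 1) :
    ∀ τ ∈ dom,
      HasDerivAt (Z2fun γ s12 s13 N lam A Om v1 v2 v3)
        ((5*γ - 6) * (3 - 2*(A τ)*(v1 τ)) * Z2fun γ s12 s13 N lam A Om v1 v2 v3 τ) τ := by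
  intro τ hτ
  obtain ⟨⟨-, -, -, -, -, hN, -, hA, hOm', -, -, -⟩, -⟩ := hsol τ hτ
  have hm0 : 0 ≤ Vsq (v1 τ) (v2 τ) (v3 τ) := by unfold Vsq; positivity
  have hm1 : Vsq (v1 τ) (v2 τ) (v3 τ) < 1 := by simpa using (Real.sqrt_lt' one_pos).1 (hV τ hτ)
  have hW : 0 < 1 - Vsq (v1 τ) (v2 τ) (v3 τ) := by linarith
  have hG : 0 < Gp γ (v1 τ) (v2 τ) (v3 τ) := by unfold Gp; nlinarith
  have hH : 0 < 1 - (γ - 1) * Vsq (v1 τ) (v2 τ) (v3 τ) := by nlinarith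
  have hVsq := hsol.hasDerivAt_Vsq hτ
  have hrateG := ((hVsq.const_mul (γ - 1)).const_add 1).hasGrowthRateAt hG.ne'
  have hrateW := (hVsq.const_sub 1).hasGrowthRateAt hW.ne'
  have hrateOm := hOm'.congr_deriv (div_mul_comm _ _ _)
  -- `rhsA` and `rhsN` are literally `rate * A` and `rate * N`
  have hZ := ((((HasGrowthRateAt.pow hA 4).mul (HasGrowthRateAt.pow hN 2)).mul
    (hrateG.pow 5)).mul ((hsol.hasGrowthRateAt_Dhat hτ).pow 2)).div
    ((hrateW.rpow hW (5*(2-γ)/2)).mul (HasGrowthRateAt.pow hrateOm 5))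
    (mul_pos (Real.rpow_pos_of_pos hW _) (pow_pos (hOm τ hτ) 5)).ne'
  refine hZ.congr_rate ?_
  push_cast
  exact Z2_growthRate_eq hG.ne' hW.ne' (Tdef_mul hH.ne')

end BianchiVI
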